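/- Every meet irreducible proper two-sided ideal of T_n, the upper triangular n×n complex matrices, has the form I(i₀,j₀) = { A ∈ T_n : A i j = 0 whenever i₀ ≤ i ≤ j ≤ j₀ } for some 1 ≤ i₀ ≤ j₀ ≤ n. -/

import Mathlib

open Matrix

/-- The algebra `T_n` of upper triangular `n × n` complex matrices. -/
def UT (n : ℕ) : Subalgebra ℂ (Matrix (Fin n) (Fin n) ℂ) where
  carrier := {A | ∀ i j : Fin n, j < i → A i j = 0}
  add_mem' := by
    intro a b ha hb i j hij
    simp [Matrix.add_apply, ha i j hij, hb i j hij]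
  mul_mem' := by
    intro a b ha hb i j hij
    show ∑ k, a i k * b k j = 0
    apply Finset.sum_eq_zero
    intro k _
    rcases lt_or_ge k i with h | h
    · rw [ha i k h, zero_mul]
    · rw [hb k j (lt_of_lt_of_le hij h), mul_zero]
  algebraMap_mem' := by
    intro r i j hij
    simp [Matrix.algebraMap_matrix_apply, (ne_of_lt hij).symm]

/-- The "wedge" set `I(i₀, j₀)` of upper triangular matrices vanishing on the
wedge `i₀ ≤ i ≤ j ≤ j₀`. -/
def wedge (n : ℕ) (i₀ j₀ : Fin n) : Set (UT n) :=
  {A | ∀ i j : Fin n, i₀ ≤ i → i ≤ j → j ≤ j₀ → (A : Matrix (Fin n) (Fin n) ℂ) i j = 0}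
/-- The wedge ideal `I(i₀, j₀)` as a two-sided ideal of `T_n`. -/
def wedgeIdeal (n : ℕ) (i₀ j₀ : Fin n) : TwoSidedIdeal (UT n) :=
  TwoSidedIdeal.mk' (wedge n i₀ j₀)
    (by intro i j _ _ _; rfl)
    (by
      intro x y hx hy i j h1 h2 h3
      show (x : Matrix (Fin n) (Fin n) ℂ) i j + (y : Matrix (Fin n) (Fin n) ℂ) i j = 0
      rw [hx i j h1 h2 h3, hy i j h1 h2 h3, add_zero])
    (by
      intro x hx i j h1 h2 h3
      show -(x : Matrix (Fin n) (Fin n) ℂ) i j = 0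
      rw [hx i j h1 h2 h3, neg_zero])
    (by
      intro x y hy i j h1 h2 h3
      show ∑ k, (x : Matrix (Fin n) (Fin n) ℂ) i k * (y : Matrix (Fin n) (Fin n) ℂ) k j = 0
      apply Finset.sum_eq_zero
      intro k _
      rcases lt_or_ge k i with h | h
      · rw [x.2 i k h, zero_mul]
      · rcases le_or_gt k j with h' | h'
        · rw [hy k j (le_trans h1 h) h' h3, mul_zero]
        · rw [y.2 k j h', mul_zero])
    (by
      intro x y hx i j h1 h2 h3
      show ∑ k, (x : Matrix (Fin n) (Fin n) ℂ) i k * (y : Matrix (Fin n) (Fin n) ℂ) k j = 0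
      apply Finset.sum_eq_zero
      intro k _
      rcases lt_or_ge k i with h | h
      · rw [x.2 i k h, zero_mul]
      · rcases le_or_gt k j with h' | h'
        · rw [hx i k h1 h (le_trans h' h3), zero_mul]
        · rw [y.2 k j h', mul_zero])

/-- An ideal `J` is *meet irreducible* if whenever two ideals containing `J`
intersect in `J`, one of them equals `J`. -/
def MeetIrred {R : Type*} [NonUnitalNonAssocRing R] (J : TwoSidedIdeal R) : Prop :=
  ∀ I₁ I₂ : TwoSidedIdeal R, J ≤ I₁ → J ≤ I₂ → I₁ ⊓ I₂ = J → I₁ = J ∨ I₂ = J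

/-! Let `Z` be the set of positions `(i, j)`, `i ≤ j`, at which every element of `I` vanishes.
Multiplying by matrix units moves any entry `(i, j)` of an element of `I` to every position
`(i₀, j₀)` with `i₀ ≤ i ≤ j ≤ j₀`, so `I ≤ I(i₀, j₀)` for `(i₀, j₀) ∈ Z`; conversely a matrix
vanishing on `Z` is the sum of its corners `E_ii A E_jj`, each zero or a multiple of the
corresponding corner of some element of `I`. Hence `I` is the finite meet of the wedge ideals
`I(i₀, j₀)`, `(i₀, j₀) ∈ Z`, and a meet irreducible proper ideal must be one of them. -/

namespace UT

variable {n : ℕ}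

def single {i j : Fin n} (h : i ≤ j) : UT n :=
  ⟨Matrix.single i j 1, fun a b hba => by
    rw [Matrix.single_apply, ite_eq_right_iff]
    rintro ⟨rfl, rfl⟩
    exact absurd h (not_le.2 hba)⟩

lemma coe_single_mul_mul_single {i' i j j' : Fin n} (h₁ : i' ≤ i) (h₂ : j ≤ j') (A : UT n) :
    ((single h₁ * A * single h₂ : UT n) : Matrix (Fin n) (Fin n) ℂ) =
      Matrix.single i' j' ((A : Matrix (Fin n) (Fin n) ℂ) i j) := by
  simp [single]

lemma sum_single_self : ∑ i : Fin n, single (le_refl i) = 1 :=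
  Subtype.ext <| by simp [single, Matrix.sum_single_one]

lemma eq_sum_corners (A : UT n) :
    A = ∑ i, ∑ j, single (le_refl i) * A * single (le_refl j) := by
  simp_rw [← Finset.mul_sum, ← Finset.sum_mul, sum_single_self, one_mul, mul_one]

lemma mem_wedgeIdeal {i₀ j₀ : Fin n} {A : UT n} :
    A ∈ wedgeIdeal n i₀ j₀ ↔ A ∈ wedge n i₀ j₀ :=
  TwoSidedIdeal.mem_mk' _ _ _ _ _ _ _

lemma le_wedgeIdeal {I : TwoSidedIdeal (UT n)} {i₀ j₀ : Fin n}
    (hI : ∀ A ∈ I, (A : Matrix (Fin n) (Fin n) ℂ) i₀ j₀ = 0) : I ≤ wedgeIdeal n i₀ j₀ := by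
  intro A hA
  rw [mem_wedgeIdeal]
  intro i j hi hij hj
  have hmem := I.mul_mem_right _ (single hj) (I.mul_mem_left (single hi) _ hA)
  simpa [coe_single_mul_mul_single] using hI _ hmem

lemma corner_mem {I : TwoSidedIdeal (UT n)} {B : UT n} (hB : B ∈ I) {i j : Fin n}
    (hBij : (B : Matrix (Fin n) (Fin n) ℂ) i j ≠ 0) (A : UT n) :
    single (le_refl i) * A * single (le_refl j) ∈ I := by
  set c := (A : Matrix (Fin n) (Fin n) ℂ) i j / (B : Matrix (Fin n) (Fin n) ℂ) i j
  have hcorner : single (le_refl i) * A * single (le_refl j) =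
      algebraMap ℂ (UT n) c * (single (le_refl i) * B * single (le_refl j)) := by
    apply Subtype.ext
    rw [coe_single_mul_mul_single, Subalgebra.coe_mul, coe_single_mul_mul_single,
      Subalgebra.coe_algebraMap, Algebra.algebraMap_eq_smul_one, smul_mul_assoc, one_mul,
      Matrix.smul_single, smul_eq_mul, div_mul_cancel₀ _ hBij]
  rw [hcorner]
  exact I.mul_mem_left _ _ (I.mul_mem_right _ _ (I.mul_mem_left _ _ hB))

open Classical in
noncomputable def commonZeros (I : TwoSidedIdeal (UT n)) : Finset (Fin n × Fin n) :=
  {p | p.1 ≤ p.2 ∧ ∀ A ∈ I, (A : Matrix (Fin n) (Fin n) ℂ) p.1 p.2 = 0}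

lemma mem_commonZeros {I : TwoSidedIdeal (UT n)} {p : Fin n × Fin n} :
    p ∈ commonZeros I ↔ p.1 ≤ p.2 ∧ ∀ A ∈ I, (A : Matrix (Fin n) (Fin n) ℂ) p.1 p.2 = 0 := by
  simp [commonZeros]

lemma mem_of_forall_mem_wedgeIdeal {I : TwoSidedIdeal (UT n)} {A : UT n}
    (hA : ∀ p ∈ commonZeros I, A ∈ wedgeIdeal n p.1 p.2) : A ∈ I := by
  rw [eq_sum_corners A]
  refine I.finsetSum_mem _ _ fun i _ => I.finsetSum_mem _ _ fun j _ => ?_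
  by_cases hAij : (A : Matrix (Fin n) (Fin n) ℂ) i j = 0
  · have hzero : single (le_refl i) * A * single (le_refl j) = 0 :=
      Subtype.ext <| by simp [coe_single_mul_mul_single, hAij]
    rw [hzero]
    exact I.zero_mem
  · have hij : i ≤ j := le_of_not_gt fun h => hAij (A.2 i j h)
    obtain ⟨B, hB, hBij⟩ : ∃ B ∈ I, (B : Matrix (Fin n) (Fin n) ℂ) i j ≠ 0 := by
      by_contra! h
      exact hAij (mem_wedgeIdeal.1 (hA (i, j) (mem_commonZeros.2 ⟨hij, h⟩)) i j le_rfl hij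
        le_rfl)
    exact corner_mem hB hBij A

lemma eq_inf_wedgeIdeal (I : TwoSidedIdeal (UT n)) :
    I = (commonZeros I).inf fun p => wedgeIdeal n p.1 p.2 :=
  le_antisymm (Finset.le_inf fun _ hp => le_wedgeIdeal (mem_commonZeros.1 hp).2)
    fun _ hA => mem_of_forall_mem_wedgeIdeal fun _ hp => Finset.inf_le (f := fun p => wedgeIdeal n p.1 p.2) hp hA

end UT

lemma MeetIrred.infIrred {R : Type*} [NonUnitalNonAssocRing R] {J : TwoSidedIdeal R}
    (hJ : MeetIrred J) (hJ_ne_top : J ≠ ⊤) : InfIrred J :=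
  ⟨fun hmax => hJ_ne_top hmax.eq_top, fun I₁ I₂ h =>
    hJ I₁ I₂ (h ▸ inf_le_left) (h ▸ inf_le_right) h⟩

/-- every meet irreducible proper two-sided ideal of `T_n` is a
wedge ideal `I(i₀,j₀)` for some `i₀ ≤ j₀`. -/
theorem meetIrreducible_eq_wedgeIdeal (n : ℕ) (I : TwoSidedIdeal (UT n))
    (hproper : I ≠ ⊤) (hmi : MeetIrred I) :
    ∃ i₀ j₀ : Fin n, i₀ ≤ j₀ ∧ I = wedgeIdeal n i₀ j₀ := by
  obtain ⟨p, hp, hpI⟩ := (hmi.infIrred hproper).finset_inf_eq (UT.eq_inf_wedgeIdeal I).symm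
  exact ⟨p.1, p.2, (UT.mem_commonZeros.1 hp).1, hpI.symm⟩
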